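/- Let N ≥ 2 be an integer, let B be the (N−1)×(N−1) constant-kernel stiffness matrix with entries B_{i,j} = 2N/3 − 1 if i = j, B_{i,j} = N/6 − 1 if |i−j| = 1, and B_{i,j} = −1 if |i−j| ≥ 2, and let D be its diagonal part. Then every eigenvalue of D⁻¹B is real and strictly less than 3, and the largest eigenvalue of D⁻¹B is at least 1; i.e., 1 ≤ λ_max(D⁻¹B) < 3. -/

import Mathlib

open Matrix

/-- The `(N−1)×(N−1)` constant-kernel stiffness matrix: `2N/3 − 1` on the diagonal,
`N/6 − 1` on the first sub/super-diagonals, and `−1` elsewhere. -/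
noncomputable def constB (N : ℕ) : Matrix (Fin (N - 1)) (Fin (N - 1)) ℝ :=
  Matrix.of fun i j =>
    if (i : ℕ) = (j : ℕ) then 2 * (N : ℝ) / 3 - 1
    else if (i : ℕ) + 1 = (j : ℕ) ∨ (j : ℕ) + 1 = (i : ℕ) then (N : ℝ) / 6 - 1
    else -1

lemma constB_key_sum (N : ℕ) (hN : 2 ≤ N) (i : Fin (N-1)) :
    ∑ j ∈ Finset.univ.erase i, |constB N i j| < 2 * (2 * (N:ℝ)/3 - 1) := by
  have hN2 : (2:ℝ) ≤ (N:ℝ) := by exact_mod_cast hN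
  set c : ℝ := max ((N:ℝ)/6 - 2) 0 with hc
  have hc0 : 0 ≤ c := le_max_right _ _
  have hbound : ∀ j ∈ Finset.univ.erase i, |constB N i j|
      ≤ 1 + (if (i : ℕ) + 1 = (j : ℕ) ∨ (j : ℕ) + 1 = (i : ℕ) then c else 0) := by
    intro j hj
    have hne : (i:ℕ) ≠ (j:ℕ) := fun h => (Finset.mem_erase.1 hj).1 (Fin.ext h.symm) |>.elim
    rw [constB, Matrix.of_apply, if_neg hne]
    by_cases h2 : (i : ℕ) + 1 = (j : ℕ) ∨ (j : ℕ) + 1 = (i : ℕ)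
    · rw [if_pos h2, if_pos h2, abs_le]
      constructor
      · have : (0:ℝ) ≤ (N:ℝ)/6 := by positivity
        nlinarith
      · have : (N:ℝ)/6 - 2 ≤ c := le_max_left _ _
        linarith
    · rw [if_neg h2, if_neg h2]
      rw [abs_neg, abs_one]
      linarith
  have hsum1 := Finset.sum_le_sum hbound
  have hcard : (Finset.univ.erase i).card = N - 2 := by
    rw [Finset.card_erase_of_mem (Finset.mem_univ i), Finset.card_univ, Fintype.card_fin]
    omega
  have hS : ((Finset.univ.erase i).filter
      (fun j : Fin (N-1) => (i : ℕ) + 1 = (j : ℕ) ∨ (j : ℕ) + 1 = (i : ℕ))).card ≤ 2 := by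
    have hsub : ∀ j ∈ (Finset.univ.erase i).filter
        (fun j : Fin (N-1) => (i : ℕ) + 1 = (j : ℕ) ∨ (j : ℕ) + 1 = (i : ℕ)),
        (j : ℕ) ∈ ({(i:ℕ)+1, (i:ℕ)-1} : Finset ℕ) := by
      intro j hj
      rcases (Finset.mem_filter.1 hj).2 with h | h
      · simp [← h]
      · simp only [Finset.mem_insert, Finset.mem_singleton]; omega
    have := Finset.card_le_card_of_injOn (f := fun j : Fin (N-1) => (j:ℕ)) hsub
      (fun a _ b _ h => Fin.ext h)
    have h22 : ({(i:ℕ)+1, (i:ℕ)-1} : Finset ℕ).card ≤ 2 :=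
      (Finset.card_insert_le _ _).trans (by simp)
    omega
  have hsum2 : ∑ j ∈ Finset.univ.erase i,
      (1 + (if (i : ℕ) + 1 = (j : ℕ) ∨ (j : ℕ) + 1 = (i : ℕ) then c else 0))
      ≤ ((N:ℝ) - 2) + 2 * c := by
    rw [Finset.sum_add_distrib, Finset.sum_const, hcard]
    have : ∑ j ∈ Finset.univ.erase i,
        (if (i : ℕ) + 1 = (j : ℕ) ∨ (j : ℕ) + 1 = (i : ℕ) then c else 0)
        = ((Finset.univ.erase i).filter
            (fun j : Fin (N-1) => (i : ℕ) + 1 = (j : ℕ) ∨ (j : ℕ) + 1 = (i : ℕ))).card • c := by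
      rw [Finset.sum_ite, Finset.sum_const, Finset.sum_const_zero, add_zero]
    rw [this, nsmul_eq_mul, nsmul_eq_mul]
    have h1 : ((N - 2 : ℕ) : ℝ) = (N:ℝ) - 2 := by
      rw [Nat.cast_sub hN]; norm_num
    have h2 : (((Finset.univ.erase i).filter
            (fun j : Fin (N-1) => (i : ℕ) + 1 = (j : ℕ) ∨ (j : ℕ) + 1 = (i : ℕ))).card : ℝ)
        ≤ 2 := by exact_mod_cast hS
    have := mul_le_mul_of_nonneg_right h2 hc0
    rw [h1]
    linarith
  have hfinal : ((N:ℝ) - 2) + 2 * c < 2 * (2 * (N:ℝ)/3 - 1) := by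
    rcases max_cases ((N:ℝ)/6 - 2) 0 with ⟨h, _⟩ | ⟨h, _⟩ <;> rw [hc, h] <;> linarith
  linarith

lemma constB_hermitian (N : ℕ) : (constB N).IsHermitian := by
  ext i j
  simp only [constB, Matrix.conjTranspose_apply, Matrix.of_apply, star_trivial]
  by_cases h : (i:ℕ) = j
  · simp [h]
  · rw [if_neg h, if_neg (Ne.symm h)]
    by_cases h2 : (i : ℕ) + 1 = (j : ℕ) ∨ (j : ℕ) + 1 = (i : ℕ)
    · rw [if_pos h2, if_pos (Or.symm h2)]
    · rw [if_neg h2, if_neg (fun hc => h2 (Or.symm hc))]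

/-- **Spectral bounds for the Jacobi-preconditioned constant-kernel stiffness
matrix.**  For `N ≥ 2`, with `D` the diagonal part of `B`: every eigenvalue of
`D⁻¹B` is real and `< 3`, and some (real) eigenvalue is `≥ 1`;
i.e. `1 ≤ λ_max(D⁻¹B) < 3`. -/
theorem stmt12 (N : ℕ) (hN : 2 ≤ N) :
    (∀ μ ∈ spectrum ℂ
        (((Matrix.diagonal fun i => constB N i i)⁻¹ * constB N).map
          (fun x : ℝ => (x : ℂ))),
        μ.im = 0 ∧ μ.re < 3) ∧
    ∃ μ ∈ spectrum ℝ ((Matrix.diagonal fun i => constB N i i)⁻¹ * constB N),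
      1 ≤ μ := by
  have hN2 : (2:ℝ) ≤ (N:ℝ) := by exact_mod_cast hN
  set d : ℝ := 2 * (N:ℝ)/3 - 1 with hdd
  have hd : (0:ℝ) < d := by rw [hdd]; linarith
  set M := (Matrix.diagonal fun i => constB N i i)⁻¹ * constB N with hMdef
  -- M = d⁻¹ • constB N
  have hMeq : M = d⁻¹ • constB N := by
    have h1 : (Matrix.diagonal fun i : Fin (N-1) => constB N i i)
        = Matrix.diagonal (fun _ => d) := by
      congr 1; funext i; simp [constB, hdd]
    have h2 : (Matrix.diagonal (fun _ : Fin (N-1) => d))⁻¹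
        = Matrix.diagonal (fun _ => d⁻¹) := by
      apply Matrix.inv_eq_right_inv
      rw [Matrix.diagonal_mul_diagonal]
      simp [mul_inv_cancel₀ hd.ne']
    rw [hMdef, h1, h2]
    ext i j
    simp [Matrix.diagonal_mul]
  have hM : M.IsHermitian := by
    rw [hMeq, Matrix.IsHermitian, Matrix.conjTranspose_smul]
    rw [(constB_hermitian N).eq]
    simp
  have hMdiag : ∀ i, M i i = 1 := by
    intro i
    rw [hMeq]
    simp only [Matrix.smul_apply, smul_eq_mul]
    rw [show constB N i i = d by simp [constB, hdd]]
    exact inv_mul_cancel₀ hd.ne'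
  have hne : Nonempty (Fin (N-1)) := ⟨⟨0, by omega⟩⟩
  constructor
  · -- complex part
    intro μ hμ
    set A := M.map (fun x : ℝ => (x : ℂ)) with hA
    have hAh : A.IsHermitian :=
      hM.map (fun x : ℝ => (x : ℂ)) (fun x => (Complex.conj_ofReal x).symm)
    -- im = 0
    have him : μ.im = 0 := by
      rw [← Matrix.spectrum_toEuclideanLin (A := A)] at hμ
      have heig : Module.End.HasEigenvalue (Matrix.toEuclideanLin A) μ :=
        Module.End.hasEigenvalue_iff_mem_spectrum.2 hμ
      have hconj := (Matrix.isHermitian_iff_isSymmetric.1 hAh).conj_eigenvalue_eq_self heig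
      exact Complex.conj_eq_iff_im.1 hconj
    refine ⟨him, ?_⟩
    -- eigenvalue of toLin'
    have hspec : spectrum ℂ (Matrix.toLin' A) = spectrum ℂ A := by
      have : Matrix.toLin' A = Matrix.toLinAlgEquiv' A := rfl
      rw [this, AlgEquiv.spectrum_eq]
    have heig : Module.End.HasEigenvalue (Matrix.toLin' A) μ := by
      rw [Module.End.hasEigenvalue_iff_mem_spectrum, hspec]; exact hμ
    obtain ⟨i, hball⟩ := eigenvalue_mem_ball heig
    have hAii : A i i = 1 := by
      rw [hA, Matrix.map_apply, hMdiag i]; norm_num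
    rw [Metric.mem_closedBall, hAii] at hball
    have hR : ∑ j ∈ Finset.univ.erase i, ‖A i j‖ < 2 := by
      have hnorm : ∀ j, ‖A i j‖ = d⁻¹ * |constB N i j| := by
        intro j
        rw [hA, Matrix.map_apply, Complex.norm_real, hMeq]
        simp only [Matrix.smul_apply, smul_eq_mul, Real.norm_eq_abs, abs_mul,
          abs_inv, abs_of_pos hd]
      calc ∑ j ∈ Finset.univ.erase i, ‖A i j‖
          = d⁻¹ * ∑ j ∈ Finset.univ.erase i, |constB N i j| := by
            rw [Finset.mul_sum]; exact Finset.sum_congr rfl fun j _ => hnorm j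
        _ < d⁻¹ * (2 * d) := by
            apply mul_lt_mul_of_pos_left _ (inv_pos.2 hd)
            exact constB_key_sum N hN i
        _ = 2 := by field_simp
    have h1 : μ.re - 1 ≤ dist μ 1 := by
      have : μ.re - 1 = (μ - 1).re := by simp
      rw [this, Complex.dist_eq]
      exact (le_abs_self _).trans (Complex.abs_re_le_norm _)
    linarith [hball.trans_lt hR, h1]
  · -- real part
    have heigs : ∀ i, hM.eigenvalues i ∈ spectrum ℝ M :=
      fun i => hM.eigenvalues_mem_spectrum_real i
    have htrace : ∑ i, hM.eigenvalues i = (Fintype.card (Fin (N-1)) : ℝ) := by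
      have hspec := hM.spectral_theorem
      have h1 : M.trace = ∑ i, hM.eigenvalues i := by
        conv_lhs => rw [hspec, Unitary.conjStarAlgAut_apply]
        rw [Matrix.trace_mul_cycle]
        rw [Matrix.mem_unitaryGroup_iff'.mp (hM.eigenvectorUnitary).2, one_mul,
          Matrix.trace_diagonal]
        simp [RCLike.ofReal]
      have h2 : M.trace = (Fintype.card (Fin (N-1)) : ℝ) := by
        rw [Matrix.trace]
        simp only [Matrix.diag_apply]
        rw [Finset.sum_congr rfl (fun i _ => hMdiag i)]
        simp
      rw [← h1, h2]
    by_contra hcon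
    push_neg at hcon
    have hlt : ∀ i : Fin (N-1), hM.eigenvalues i < 1 := by
      intro i
      exact hcon _ (heigs i)
    have := Finset.sum_lt_sum_of_nonempty (Finset.univ_nonempty) (fun i _ => hlt i)
    rw [htrace, Finset.sum_const, nsmul_eq_mul, mul_one, Finset.card_univ] at this
    exact lt_irrefl _ this
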